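/- For every n ≥ 1, the truncated Heisenberg matrices satisfy [X_n, Z_n] = i(Y_n Z_n + Z_n Y_n) and [Y_n, Z_n] = −i(X_n Z_n + Z_n X_n). -/
import Mathlib


noncomputable section

/-- The truncated position matrix `X_n`: symmetric tridiagonal with zero diagonal and
`(X_n)_{m,m+1} = (X_n)_{m+1,m} = √m/√2`. -/
def truncX (n : ℕ) : Matrix (Fin n) (Fin n) ℂ := fun i j =>
  if (i : ℕ) + 1 = (j : ℕ) then ((Real.sqrt ((i : ℕ) + 1) / Real.sqrt 2 : ℝ) : ℂ)
  else if (j : ℕ) + 1 = (i : ℕ) then ((Real.sqrt ((j : ℕ) + 1) / Real.sqrt 2 : ℝ) : ℂ)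
  else 0

/-- The truncated momentum matrix `Y_n`: zero diagonal, `(Y_n)_{m,m+1} = −i√m/√2`,
`(Y_n)_{m+1,m} = i√m/√2`. -/
def truncY (n : ℕ) : Matrix (Fin n) (Fin n) ℂ := fun i j =>
  if (i : ℕ) + 1 = (j : ℕ) then -Complex.I * ((Real.sqrt ((i : ℕ) + 1) / Real.sqrt 2 : ℝ) : ℂ)
  else if (j : ℕ) + 1 = (i : ℕ) then Complex.I * ((Real.sqrt ((j : ℕ) + 1) / Real.sqrt 2 : ℝ) : ℂ)
  else 0

/-- The matrix `Z_n`: diagonal, all diagonal entries `0` except the last, which equals `n`. -/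
def truncZ (n : ℕ) : Matrix (Fin n) (Fin n) ℂ :=
  Matrix.diagonal fun i => if (i : ℕ) = n - 1 then (n : ℂ) else 0

/-- `[X_n, Z_n] = i(Y_n Z_n + Z_n Y_n)` and
`[Y_n, Z_n] = −i(X_n Z_n + Z_n X_n)`. -/
theorem truncated_heisenberg_XZ_YZ (n : ℕ) (hn : 1 ≤ n) :
    truncX n * truncZ n - truncZ n * truncX n
      = Complex.I • (truncY n * truncZ n + truncZ n * truncY n) ∧
    truncY n * truncZ n - truncZ n * truncY n
      = (-Complex.I) • (truncX n * truncZ n + truncZ n * truncX n) := by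
  constructor <;>
  · ext i j
    have hi := i.isLt
    have hj := j.isLt
    simp only [Matrix.sub_apply, Matrix.add_apply, Matrix.smul_apply, smul_eq_mul,
      truncZ, Matrix.mul_diagonal, Matrix.diagonal_mul, truncX, truncY]
    by_cases h1 : (i : ℕ) + 1 = (j : ℕ)
    · have hine : ¬ (i : ℕ) = n - 1 := by omega
      simp only [if_pos h1, if_neg hine,
        if_neg (show ¬ (j : ℕ) + 1 = (i : ℕ) by omega), mul_zero, zero_mul, add_zero, sub_zero]
      ring_nf
      try rw [Complex.I_sq]
      try ring
    · by_cases h2 : (j : ℕ) + 1 = (i : ℕ)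
      · have hjne : ¬ (j : ℕ) = n - 1 := by omega
        simp only [if_neg h1, if_pos h2, if_neg hjne, mul_zero, zero_mul, zero_add, zero_sub]
        ring_nf
        try rw [Complex.I_sq]
        try ring
      · simp [h1, h2]
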